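/- arXiv:2409.16389 — 5 statements merged into one kernel-verified Lean document; each statement's English description precedes it below -/
import Mathlib

section
/- Let the nonlinear system x_{k+1} = f(x_k, u_k), y_k = g(x_k, u_k) admit a Koopman linear embedding (Φ, A, B, C, D) of dimension n_z, and let L > n_z. Let (u, y) ∈ ℬ₂|_L be a length-L trajectory of the Koopman linear embedding. Then (u, y) ∈ ℬ₁|_L (i.e., (u,y) is a trajectory of the nonlinear system) if and only if its leading length-n_z subsequence (u_{0:n_z−1}, y_{0:n_z−1}) is a length-n_z trajectory of the nonlinear system, i.e., (u_{0:n_z−1}, y_{0:n_z−1}) ∈ ℬ₁|_{n_z}. -/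
/-!
The discrepancy `w k = Φ (x k) - z k` between the lifted state of a nonlinear trajectory and
the state of a Koopman trajectory with the same inputs evolves autonomously, `w (k+1) = A w k`,
and its outputs `C w k` are the differences of the two output sequences. If the outputs agree
for the first `n_z` steps, then `C A^i w 0 = 0` for `i < n_z`, and by Cayley–Hamilton
(`A^k` is a combination of `A^0, …, A^(n_z - 1)`) for every `k`. So running the nonlinear
system past step `n_z` with the given inputs keeps reproducing `y`.
-/

open Polynomial Matrix

namespace Matrix

variable {R ι κ : Type*} [CommRing R] [Fintype ι] [DecidableEq ι]

theorem mulVec_pow_mulVec_eq_zero_of_forall_lt_card [Nontrivial R]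
    (A : Matrix ι ι R) (C : Matrix κ ι R) {v : ι → R}
    (h : ∀ i < Fintype.card ι, C *ᵥ (A ^ i *ᵥ v) = 0) (k : ℕ) :
    C *ᵥ (A ^ k *ᵥ v) = 0 := by
  rcases isEmpty_or_nonempty ι with hι | hι
  · rw [Subsingleton.elim (A ^ k *ᵥ v) 0, mulVec_zero]
  have hcharpoly : A.charpoly ≠ 1 := fun h1 =>
    (Fintype.card_ne_zero (α := ι)) (by simpa [h1] using A.charpoly_natDegree_eq_dim.symm)
  have hdeg : (X ^ k %ₘ A.charpoly).natDegree < Fintype.card ι := by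
    rw [← A.charpoly_natDegree_eq_dim]
    exact natDegree_modByMonic_lt _ A.charpoly_monic hcharpoly
  rw [A.pow_eq_aeval_mod_charpoly, aeval_eq_sum_range' hdeg, sum_mulVec, mulVec_sum]
  refine Finset.sum_eq_zero fun i hi => ?_
  rw [smul_mulVec, mulVec_smul, h i (Finset.mem_range.1 hi), smul_zero]

theorem eq_pow_mulVec_of_forall_lt {A : Matrix ι ι R} {w : ℕ → ι → R} {L : ℕ}
    (hw : ∀ k < L, w (k + 1) = A *ᵥ w k) : ∀ k ≤ L, w k = A ^ k *ᵥ w 0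
  | 0, _ => by rw [pow_zero, one_mulVec]
  | k + 1, hk => by
    rw [hw k hk, eq_pow_mulVec_of_forall_lt hw k (Nat.le_of_succ_le hk), mulVec_mulVec,
      ← pow_succ']

end Matrix

section Rollout

variable {X U : Type*}

def rollout (f : X → U → X) (u : ℕ → U) (x₀ : X) : ℕ → X
  | 0 => x₀
  | k + 1 => f (rollout f u x₀ k) (u k)

theorem rollout_eq_of_forall_lt {f : X → U → X} {u : ℕ → U} {x : ℕ → X} {N : ℕ}
    (hx : ∀ k < N, x (k + 1) = f (x k) (u k)) : ∀ k ≤ N, rollout f u (x 0) k = x k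
  | 0, _ => rfl
  | k + 1, hk => by
    rw [rollout, rollout_eq_of_forall_lt hx k (Nat.le_of_succ_le hk), hx k hk]

theorem koopman_sub_eq_pow_mulVec {R ι κ : Type*} [CommRing R] [Fintype ι] [Fintype κ]
    [DecidableEq ι] {f : X → (κ → R) → X} {Φ : X → ι → R} {A : Matrix ι ι R}
    {B : Matrix ι κ R} (hdyn : ∀ x u, Φ (f x u) = A *ᵥ Φ x + B *ᵥ u)
    {u : ℕ → κ → R} {z : ℕ → ι → R} {L : ℕ}
    (hz : ∀ k < L, z (k + 1) = A *ᵥ z k + B *ᵥ u k) (x₀ : X) :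
    ∀ k ≤ L, Φ (rollout f u x₀ k) - z k = A ^ k *ᵥ (Φ x₀ - z 0) := by
  refine eq_pow_mulVec_of_forall_lt (w := fun k => Φ (rollout f u x₀ k) - z k) ?_
  intro k hk
  simp only [rollout, hdyn, hz k hk, mulVec_sub]
  abel

end Rollout

theorem koopman_traj_mem_nonlinear_iff_leading
    (n m p nz L : ℕ) (hL : nz < L)
    (f : (Fin n → ℝ) → (Fin m → ℝ) → (Fin n → ℝ))
    (g : (Fin n → ℝ) → (Fin m → ℝ) → (Fin p → ℝ))
    (Φ : (Fin n → ℝ) → (Fin nz → ℝ))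
    (A : Matrix (Fin nz) (Fin nz) ℝ) (B : Matrix (Fin nz) (Fin m) ℝ)
    (C : Matrix (Fin p) (Fin nz) ℝ) (D : Matrix (Fin p) (Fin m) ℝ)
    -- (Φ, A, B, C, D) is a Koopman linear embedding of the nonlinear system (f, g):
    (hdyn : ∀ x u, Φ (f x u) = A.mulVec (Φ x) + B.mulVec u)
    (hout : ∀ x u, g x u = C.mulVec (Φ x) + D.mulVec u)
    (u : ℕ → Fin m → ℝ) (y : ℕ → Fin p → ℝ)
    -- (u, y) ∈ ℬ₂|_L :
    (hB2 : ∃ z : ℕ → (Fin nz → ℝ),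
      ∀ k < L, z (k + 1) = A.mulVec (z k) + B.mulVec (u k) ∧
        y k = C.mulVec (z k) + D.mulVec (u k)) :
    -- (u, y) ∈ ℬ₁|_L ↔ (u_{0:nz-1}, y_{0:nz-1}) ∈ ℬ₁|_{nz} :
    (∃ x : ℕ → (Fin n → ℝ),
      ∀ k < L, x (k + 1) = f (x k) (u k) ∧ y k = g (x k) (u k)) ↔
    (∃ x : ℕ → (Fin n → ℝ),
      ∀ k < nz, x (k + 1) = f (x k) (u k) ∧ y k = g (x k) (u k)) := by
  refine ⟨fun ⟨x, hx⟩ => ⟨x, fun k hk => hx k (hk.trans hL)⟩, fun ⟨x, hx⟩ => ?_⟩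
  obtain ⟨z, hz⟩ := hB2
  have hw := koopman_sub_eq_pow_mulVec hdyn (fun k hk => (hz k hk).1) (x 0)
  have hrollout := rollout_eq_of_forall_lt (fun k hk => (hx k hk).1)
  have hy_iff : ∀ k < L, y k = g (rollout f u (x 0) k) (u k) ↔
      C *ᵥ (A ^ k *ᵥ (Φ (x 0) - z 0)) = 0 := fun k hk => by
    rw [← hw k hk.le, mulVec_sub, sub_eq_zero, hout, (hz k hk).2, eq_comm, add_left_inj]
  have hobs := mulVec_pow_mulVec_eq_zero_of_forall_lt_card A C fun i hi => by
    rw [Fintype.card_fin] at hi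
    rw [← hy_iff i (hi.trans hL), hrollout i hi.le]
    exact (hx i hi).2
  exact ⟨rollout f u (x 0), fun k hk => ⟨rfl, (hy_iff k hk).2 (hobs k)⟩⟩
end

section
/- Consider a linear time-invariant system x_{k+1} = A₁x_k + B₁u_k, y_k = C₁x_k + D₁u_k with state dimension ñ. Fix lengths L > L₁ ≥ ñ. Suppose (u, y) and (u, ỹ) are two length-L input-output trajectories of the system with the same input sequence u, and suppose their outputs agree on the first L₁ steps, i.e., y_k = ỹ_k for 0 ≤ k ≤ L₁ − 1. Then y_k = ỹ_k for all 0 ≤ k ≤ L − 1. In other words, given any fixed length-L₁ initial input-output trajectory with L₁ ≥ ñ and any subsequent input sequence, the subsequent output sequence is unique; no observability assumption is required. -/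
/-!
STATEMENT 2 (Lemma 2): For an LTI system with state dimension ñ and L > L₁ ≥ ñ, if two
length-L input-output trajectories share the same input sequence and their outputs agree
on the first L₁ steps, then their outputs agree on all L steps (no observability needed).
-/

private lemma sum_mulVec_aux {ι m n : Type*} [Fintype n] (s : Finset ι)
    (M : ι → Matrix m n ℝ) (v : n → ℝ) :
    (∑ i ∈ s, M i).mulVec v = ∑ i ∈ s, (M i).mulVec v := by
  classical
  induction s using Finset.cons_induction with
  | empty => simp [Matrix.mulVec, dotProduct]
  | cons a s ha ih => simp [Finset.sum_insert ha, Matrix.add_mulVec, ih]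

private lemma mulVec_sum_aux {ι m n : Type*} [Fintype n] (s : Finset ι)
    (M : Matrix m n ℝ) (v : ι → n → ℝ) :
    M.mulVec (∑ i ∈ s, v i) = ∑ i ∈ s, M.mulVec (v i) := by
  classical
  induction s using Finset.cons_induction with
  | empty => simp [Matrix.mulVec, dotProduct]
  | cons a s ha ih => simp [Finset.sum_insert ha, Matrix.mulVec_add, ih]

theorem lti_future_output_unique
    (ntil mtil ptil L L₁ : ℕ) (hL₁ : ntil ≤ L₁) (hL : L₁ < L)
    (A₁ : Matrix (Fin ntil) (Fin ntil) ℝ) (B₁ : Matrix (Fin ntil) (Fin mtil) ℝ)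
    (C₁ : Matrix (Fin ptil) (Fin ntil) ℝ) (D₁ : Matrix (Fin ptil) (Fin mtil) ℝ)
    (u : ℕ → Fin mtil → ℝ) (y ytil : ℕ → Fin ptil → ℝ)
    -- (u, y) is a length-L trajectory of the LTI system:
    (hy : ∃ x : ℕ → (Fin ntil → ℝ),
      ∀ k < L, x (k + 1) = A₁.mulVec (x k) + B₁.mulVec (u k) ∧
        y k = C₁.mulVec (x k) + D₁.mulVec (u k))
    -- (u, ỹ) is a length-L trajectory of the LTI system:
    (hyt : ∃ x : ℕ → (Fin ntil → ℝ),
      ∀ k < L, x (k + 1) = A₁.mulVec (x k) + B₁.mulVec (u k) ∧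
        ytil k = C₁.mulVec (x k) + D₁.mulVec (u k))
    -- outputs agree on the first L₁ steps:
    (hagree : ∀ k < L₁, y k = ytil k) :
    -- then the outputs agree on all L steps:
    ∀ k < L, y k = ytil k := by
  obtain ⟨x, hx⟩ := hy
  obtain ⟨xt, hxt⟩ := hyt
  set d : Fin ntil → ℝ := x 0 - xt 0 with hd
  -- the difference of states evolves as A₁ ^ k applied to d
  have hdelta : ∀ k ≤ L, x k - xt k = (A₁ ^ k).mulVec d := by
    intro k hk
    induction k with
    | zero => simp [hd]
    | succ k ih =>
      have hkL : k < L := hk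
      have ih' := ih (le_of_lt hkL)
      have h1 := (hx k hkL).1
      have h2 := (hxt k hkL).1
      rw [h1, h2]
      have : A₁.mulVec (x k) + B₁.mulVec (u k) - (A₁.mulVec (xt k) + B₁.mulVec (u k))
          = A₁.mulVec (x k - xt k) := by
        rw [Matrix.mulVec_sub]; abel
      rw [this, ih', Matrix.mulVec_mulVec, ← pow_succ']
  -- output difference in terms of the state difference
  have hout : ∀ k < L, y k - ytil k = C₁.mulVec ((A₁ ^ k).mulVec d) := by
    intro k hk
    have h1 := (hx k hk).2
    have h2 := (hxt k hk).2
    rw [h1, h2, ← hdelta k (le_of_lt hk), Matrix.mulVec_sub]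
    abel
  -- base: C₁ A₁^k d = 0 for k < L₁
  have hbase : ∀ k < L₁, C₁.mulVec ((A₁ ^ k).mulVec d) = 0 := by
    intro k hk
    rw [← hout k (lt_trans hk hL), hagree k hk, sub_self]
  -- Cayley–Hamilton: A₁ ^ ntil is a combination of lower powers
  have hpow : A₁ ^ ntil = ∑ i ∈ Finset.range ntil, (-(A₁.charpoly.coeff i)) • A₁ ^ i := by
    rcases Nat.eq_zero_or_pos ntil with h0 | h0
    · subst h0
      simp
      exact Subsingleton.elim _ _
    · have hdeg : (A₁.charpoly).natDegree = ntil := by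
        simp [Matrix.charpoly_natDegree_eq_dim]
      have hCH : (Polynomial.aeval A₁) A₁.charpoly = 0 := A₁.aeval_self_charpoly
      have h1 : (Polynomial.aeval A₁) A₁.charpoly
          = ∑ i ∈ Finset.range (ntil + 1), A₁.charpoly.coeff i • A₁ ^ i := by
        rw [Polynomial.aeval_eq_sum_range, hdeg]
      rw [hCH, Finset.sum_range_succ] at h1
      have hc : A₁.charpoly.coeff ntil = 1 := by
        have := A₁.charpoly_monic.coeff_natDegree
        rwa [hdeg] at this
      rw [hc, one_smul] at h1
      have h2 : A₁ ^ ntil = -∑ i ∈ Finset.range ntil, A₁.charpoly.coeff i • A₁ ^ i :=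
        eq_neg_of_add_eq_zero_right h1.symm
      rw [h2, ← Finset.sum_neg_distrib]
      simp [neg_smul]
  -- key: C₁ A₁^k d = 0 for all k
  have key : ∀ k, C₁.mulVec ((A₁ ^ k).mulVec d) = 0 := by
    intro k
    induction k using Nat.strong_induction_on with
    | _ k ih =>
      by_cases hk : k < L₁
      · exact hbase k hk
      · have hkn : ntil ≤ k := le_trans hL₁ (le_of_not_gt hk)
        have hks : k = (k - ntil) + ntil := (Nat.sub_add_cancel hkn).symm
        rw [hks, pow_add, hpow, Finset.mul_sum]
        have hsum : (∑ i ∈ Finset.range ntil,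
            A₁ ^ (k - ntil) * ((-(A₁.charpoly.coeff i)) • A₁ ^ i)).mulVec d
            = ∑ i ∈ Finset.range ntil,
              (-(A₁.charpoly.coeff i)) • ((A₁ ^ (k - ntil + i)).mulVec d) := by
          rw [sum_mulVec_aux]
          congr 1
          ext i
          rw [mul_smul_comm, Matrix.smul_mulVec, ← pow_add]
        rw [hsum, mulVec_sum_aux]
        apply Finset.sum_eq_zero
        intro i hi
        have hi' : i < ntil := Finset.mem_range.mp hi
        have hlt : k - ntil + i < k := by omega
        rw [Matrix.mulVec_smul, ih _ hlt, smul_zero]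
  intro k hk
  have := hout k hk
  rw [key k] at this
  exact sub_eq_zero.mp this
end

section
/- Consider a linear time-invariant system x_{k+1} = A₁x_k + B₁u_k, y_k = C₁x_k + D₁u_k with state dimension ñ, input dimension m̃ and output dimension p̃. Let (u_d, x_d, y_d) be a length-n_d input-state-output trajectory of the system and let 1 ≤ L ≤ n_d. Assume the matrix H₀ := col(𝓗₁(x_{d,0:n_d−L}), 𝓗_L(u_d)) has full row rank. Then a length-L input-output sequence (u, y) ∈ ℝ^{(m̃+p̃)L} is a trajectory of the system if and only if there exists g ∈ ℝ^{n_d−L+1} such that 𝓗_L(u_d) g = u and 𝓗_L(y_d) g = y. -/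
/-!
STATEMENT 3 (Willems' fundamental lemma, Lemma 1): For an LTI system with a pre-collected
length-n_d input-state-output trajectory (u_d, x_d, y_d) and 1 ≤ L ≤ n_d, if
H₀ := col(𝓗₁(x_{d,0:n_d-L}), 𝓗_L(u_d)) has full row rank, then a length-L input-output
sequence (u, y) is a trajectory of the system iff ∃ g with 𝓗_L(u_d) g = u, 𝓗_L(y_d) g = y.
-/

/-- Order-`L` (block) Hankel matrix of a length-`T` sequence of vectors in `ℝ^q`:
the `((i,a), j)` entry is the `a`-th component of `ω_{i+j}`. -/
def hankel (q L T : ℕ) (ω : ℕ → Fin q → ℝ) :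
    Matrix (Fin L × Fin q) (Fin (T - L + 1)) ℝ :=
  Matrix.of fun ia j => ω ((ia.1 : ℕ) + (j : ℕ)) ia.2

/-
Every column window of the data is itself a trajectory, so by linearity `𝓗_L(u_d) g`, `𝓗_L(y_d) g`
is the input-output part of a trajectory whose initial state is `𝓗₁(x_d) g`. Conversely a
trajectory is determined by its initial state and input, and full row rank of `H₀` lets us reach
any initial state and input with a single `g`.
-/

open Matrix

theorem Matrix.mulVec_surjective_of_rank_eq_card {K m n : Type*} [Field K] [Fintype m]
    [Fintype n] (M : Matrix m n K) (h : M.rank = Fintype.card m) :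
    Function.Surjective M.mulVec := by
  rw [← Matrix.coe_mulVecLin, ← LinearMap.range_eq_top]
  apply Submodule.eq_top_of_finrank_eq
  rwa [Module.finrank_fintype_fun_eq_card]

theorem hankel_mulVec (q L T : ℕ) (ω : ℕ → Fin q → ℝ) (g : Fin (T - L + 1) → ℝ) :
    hankel q L T ω *ᵥ g = fun ia => (∑ j, g j • ω (ia.1 + j)) ia.2 := by
  ext ia
  simp [hankel, mulVec, dotProduct, Finset.sum_apply, mul_comm]

theorem hankel_mulVec_eq_iff {q L T : ℕ} {ω : ℕ → Fin q → ℝ} {g : Fin (T - L + 1) → ℝ}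
    {v : ℕ → Fin q → ℝ} :
    hankel q L T ω *ᵥ g = (fun ia : Fin L × Fin q => v ia.1 ia.2) ↔
      ∀ k < L, ∑ j, g j • ω (k + j) = v k := by
  rw [hankel_mulVec]
  constructor
  · intro h k hk
    ext a
    exact congrFun h (⟨k, hk⟩, a)
  · intro h
    ext ⟨i, a⟩
    rw [h i i.isLt]

section Trajectory

variable {R n m p : Type*} [CommSemiring R] [Fintype n] [Fintype m]

def IsTrajectory (A : Matrix n n R) (B : Matrix n m R) (C : Matrix p n R) (D : Matrix p m R)
    (L : ℕ) (x : ℕ → n → R) (u : ℕ → m → R) (y : ℕ → p → R) : Prop :=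
  ∀ k < L, x (k + 1) = A *ᵥ x k + B *ᵥ u k ∧ y k = C *ᵥ x k + D *ᵥ u k

namespace IsTrajectory

variable {A : Matrix n n R} {B : Matrix n m R} {C : Matrix p n R} {D : Matrix p m R} {L : ℕ}
  {x x' : ℕ → n → R} {u u' : ℕ → m → R} {y y' : ℕ → p → R}

theorem shift {N : ℕ} (h : IsTrajectory A B C D N x u y) {j : ℕ} (hj : j + L ≤ N) :
    IsTrajectory A B C D L (fun k => x (k + j)) (fun k => u (k + j)) (fun k => y (k + j)) := by
  intro k hk
  simpa only [Nat.add_right_comm k 1 j] using h (k + j) (by omega)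

theorem sum_smul {ι : Type*} (s : Finset ι) (g : ι → R) {xs : ι → ℕ → n → R}
    {us : ι → ℕ → m → R} {ys : ι → ℕ → p → R}
    (h : ∀ i ∈ s, IsTrajectory A B C D L (xs i) (us i) (ys i)) :
    IsTrajectory A B C D L (fun k => ∑ i ∈ s, g i • xs i k) (fun k => ∑ i ∈ s, g i • us i k)
      (fun k => ∑ i ∈ s, g i • ys i k) := by
  intro k hk
  simp only [mulVec_sum, mulVec_smul, ← Finset.sum_add_distrib, ← smul_add]
  constructor <;> refine Finset.sum_congr rfl fun i hi => ?_
  · rw [(h i hi k hk).1]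
  · rw [(h i hi k hk).2]

theorem congr (h : IsTrajectory A B C D L x u y) (hu : ∀ k < L, u k = u' k)
    (hy : ∀ k < L, y k = y' k) : IsTrajectory A B C D L x u' y' := by
  intro k hk
  rw [← hu k hk, ← hy k hk]
  exact h k hk

theorem state_eq (h : IsTrajectory A B C D L x u y) (h' : IsTrajectory A B C D L x' u' y')
    (h0 : x 0 = x' 0) (hu : ∀ k < L, u k = u' k) : ∀ k ≤ L, x k = x' k
  | 0, _ => h0
  | k + 1, hk => by
    rw [(h k hk).1, (h' k hk).1, state_eq h h' h0 hu k (by omega), hu k hk]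

theorem output_eq (h : IsTrajectory A B C D L x u y) (h' : IsTrajectory A B C D L x' u' y')
    (h0 : x 0 = x' 0) (hu : ∀ k < L, u k = u' k) : ∀ k < L, y k = y' k := fun k hk => by
  rw [(h k hk).2, (h' k hk).2, state_eq h h' h0 hu k hk.le, hu k hk]

end IsTrajectory

end Trajectory

theorem willems_fundamental_lemma_general
    (ntil mtil ptil nd L : ℕ) (hLnd : L ≤ nd)
    (A₁ : Matrix (Fin ntil) (Fin ntil) ℝ) (B₁ : Matrix (Fin ntil) (Fin mtil) ℝ)
    (C₁ : Matrix (Fin ptil) (Fin ntil) ℝ) (D₁ : Matrix (Fin ptil) (Fin mtil) ℝ)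
    (ud : ℕ → Fin mtil → ℝ) (xd : ℕ → Fin ntil → ℝ) (yd : ℕ → Fin ptil → ℝ)
    -- (u_d, x_d, y_d) is a length-n_d input-state-output trajectory of the system:
    (hdata : ∀ k < nd, xd (k + 1) = A₁.mulVec (xd k) + B₁.mulVec (ud k) ∧
      yd k = C₁.mulVec (xd k) + D₁.mulVec (ud k))
    -- H₀ = col(𝓗₁(x_{d,0:n_d-L}), 𝓗_L(u_d)) has full row rank:
    (hrank : (Matrix.fromRows
        (Matrix.of fun (a : Fin ntil) (j : Fin (nd - L + 1)) => xd (j : ℕ) a)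
        (hankel mtil L nd ud)).rank
      = Fintype.card (Fin ntil ⊕ Fin L × Fin mtil))
    (u : ℕ → Fin mtil → ℝ) (y : ℕ → Fin ptil → ℝ) :
    -- (u, y) is a length-L trajectory of the system iff
    (∃ x : ℕ → (Fin ntil → ℝ),
      ∀ k < L, x (k + 1) = A₁.mulVec (x k) + B₁.mulVec (u k) ∧
        y k = C₁.mulVec (x k) + D₁.mulVec (u k)) ↔
    -- ∃ g such that 𝓗_L(u_d) g = u and 𝓗_L(y_d) g = y:
    (∃ g : Fin (nd - L + 1) → ℝ,
      (hankel mtil L nd ud).mulVec g = (fun ia : Fin L × Fin mtil => u (ia.1 : ℕ) ia.2) ∧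
      (hankel ptil L nd yd).mulVec g = (fun ia : Fin L × Fin ptil => y (ia.1 : ℕ) ia.2)) := by
  have window : ∀ g : Fin (nd - L + 1) → ℝ, IsTrajectory A₁ B₁ C₁ D₁ L
      (fun k => ∑ j, g j • xd (k + j)) (fun k => ∑ j, g j • ud (k + j))
      (fun k => ∑ j, g j • yd (k + j)) := fun g =>
    IsTrajectory.sum_smul _ g fun j _ => IsTrajectory.shift hdata (by omega)
  simp only [hankel_mulVec_eq_iff]
  constructor
  · rintro ⟨x, hx⟩
    obtain ⟨g, hg⟩ := mulVec_surjective_of_rank_eq_card _ hrank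
      (Sum.elim (x 0) fun ia : Fin L × Fin mtil => u ia.1 ia.2)
    obtain ⟨hg0, hgu⟩ := Sum.elim_eq_iff.1 ((fromRows_mulVec _ _ g).symm.trans hg)
    have hx0 : ∑ j, g j • xd (0 + j) = x 0 := by
      rw [← hg0]
      ext a
      simp [mulVec, dotProduct, Finset.sum_apply, mul_comm]
    rw [hankel_mulVec_eq_iff] at hgu
    exact ⟨g, hgu, (window g).output_eq hx hx0 hgu⟩
  · rintro ⟨g, hgu, hgy⟩
    exact ⟨fun k => ∑ j, g j • xd (k + j), (window g).congr hgu hgy⟩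

theorem willems_fundamental_lemma
    (ntil mtil ptil nd L : ℕ) (hL : 1 ≤ L) (hLnd : L ≤ nd)
    (A₁ : Matrix (Fin ntil) (Fin ntil) ℝ) (B₁ : Matrix (Fin ntil) (Fin mtil) ℝ)
    (C₁ : Matrix (Fin ptil) (Fin ntil) ℝ) (D₁ : Matrix (Fin ptil) (Fin mtil) ℝ)
    (ud : ℕ → Fin mtil → ℝ) (xd : ℕ → Fin ntil → ℝ) (yd : ℕ → Fin ptil → ℝ)
    -- (u_d, x_d, y_d) is a length-n_d input-state-output trajectory of the system:
    (hdata : ∀ k < nd, xd (k + 1) = A₁.mulVec (xd k) + B₁.mulVec (ud k) ∧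
      yd k = C₁.mulVec (xd k) + D₁.mulVec (ud k))
    -- H₀ = col(𝓗₁(x_{d,0:n_d-L}), 𝓗_L(u_d)) has full row rank:
    (hrank : (Matrix.fromRows
        (Matrix.of fun (a : Fin ntil) (j : Fin (nd - L + 1)) => xd (j : ℕ) a)
        (hankel mtil L nd ud)).rank
      = Fintype.card (Fin ntil ⊕ Fin L × Fin mtil))
    (u : ℕ → Fin mtil → ℝ) (y : ℕ → Fin ptil → ℝ) :
    -- (u, y) is a length-L trajectory of the system iff
    (∃ x : ℕ → (Fin ntil → ℝ),
      ∀ k < L, x (k + 1) = A₁.mulVec (x k) + B₁.mulVec (u k) ∧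
        y k = C₁.mulVec (x k) + D₁.mulVec (u k)) ↔
    -- ∃ g such that 𝓗_L(u_d) g = u and 𝓗_L(y_d) g = y:
    (∃ g : Fin (nd - L + 1) → ℝ,
      (hankel mtil L nd ud).mulVec g = (fun ia : Fin L × Fin mtil => u (ia.1 : ℕ) ia.2) ∧
      (hankel ptil L nd yd).mulVec g = (fun ia : Fin L × Fin ptil => y (ia.1 : ℕ) ia.2)) :=
  willems_fundamental_lemma_general ntil mtil ptil nd L hLnd A₁ B₁ C₁ D₁ ud xd yd hdata hrank u y
end

section
/- Let the nonlinear system x_{k+1} = f(x_k, u_k), y_k = g(x_k, u_k) admit a Koopman linear embedding (Φ, A, B, C, D) of dimension n_z. Suppose l length-L trajectories (u_d^i, y_d^i), i = 1,…,l, of the nonlinear system, with initial states x₀^i, provide lifted excitation of order L. Let H_d be the (m+p)L × l matrix whose i-th column is col(u_d^i, y_d^i). Then a length-L input-output sequence (u, y) ∈ ℝ^{(m+p)L} is a trajectory of the Koopman linear embedding (i.e., (u,y) ∈ ℬ₂|_L) if and only if there exists g ∈ ℝ^l such that H_d g = col(u, y). -/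
lemma sum_mulVec' {l q r : ℕ} (M : Matrix (Fin q) (Fin r) ℝ) (c : Fin l → ℝ)
    (v : Fin l → Fin r → ℝ) (a : Fin q) :
    ∑ i, c i * M.mulVec (v i) a = M.mulVec (fun b => ∑ i, c i * v i b) a := by
  simp only [Matrix.mulVec, dotProduct, Finset.mul_sum]
  rw [Finset.sum_comm]
  exact Finset.sum_congr rfl fun _ _ => Finset.sum_congr rfl fun _ _ => by ring

lemma surjective_mulVec_of_rank {ι κ : Type*} [Fintype ι] [Fintype κ]
    (M : Matrix ι κ ℝ) (h : M.rank = Fintype.card ι) :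
    Function.Surjective M.mulVec := by
  have htop : LinearMap.range M.mulVecLin = ⊤ := by
    apply Submodule.eq_top_of_finrank_eq
    rw [← Matrix.rank, h, Module.finrank_fintype_fun_eq_card]
  intro w
  obtain ⟨gc, hgc⟩ := LinearMap.range_eq_top.mp htop w
  exact ⟨gc, hgc⟩

/-!
STATEMENT 4 (Theorem 2): Suppose the nonlinear system admits a Koopman linear embedding
(Φ, A, B, C, D) of dimension n_z, and l length-L trajectories (u_d^i, y_d^i) with initial
states x₀^i provide lifted excitation of order L. Then (u, y) is a length-L trajectory of
the Koopman linear embedding iff ∃ g ∈ ℝ^l with H_d g = col(u, y), where H_d is the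
(m+p)L × l trajectory library whose i-th column is col(u_d^i, y_d^i).
-/

theorem koopman_behavior_from_lifted_excitation
    (n m p nz L l : ℕ)
    (f : (Fin n → ℝ) → (Fin m → ℝ) → (Fin n → ℝ))
    (g : (Fin n → ℝ) → (Fin m → ℝ) → (Fin p → ℝ))
    (Φ : (Fin n → ℝ) → (Fin nz → ℝ))
    (A : Matrix (Fin nz) (Fin nz) ℝ) (B : Matrix (Fin nz) (Fin m) ℝ)
    (C : Matrix (Fin p) (Fin nz) ℝ) (D : Matrix (Fin p) (Fin m) ℝ)
    -- (Φ, A, B, C, D) is a Koopman linear embedding of the nonlinear system (f, g):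
    (hdyn : ∀ x u, Φ (f x u) = A.mulVec (Φ x) + B.mulVec u)
    (hout : ∀ x u, g x u = C.mulVec (Φ x) + D.mulVec u)
    -- the data: l length-L trajectories of the nonlinear system with initial states x₀^i:
    (ud : Fin l → ℕ → Fin m → ℝ) (yd : Fin l → ℕ → Fin p → ℝ)
    (x₀ : Fin l → Fin n → ℝ)
    (hdata : ∀ i : Fin l, ∃ x : ℕ → (Fin n → ℝ), x 0 = x₀ i ∧
      ∀ k < L, x (k + 1) = f (x k) (ud i k) ∧ yd i k = g (x k) (ud i k))
    -- lifted excitation of order L: l ≥ mL + n_z and H_K has full row rank: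
    (hl : m * L + nz ≤ l)
    (hHK : (Matrix.of fun (r : (Fin L × Fin m) ⊕ Fin nz) (i : Fin l) =>
        Sum.elim (fun ka : Fin L × Fin m => ud i (ka.1 : ℕ) ka.2)
          (fun a : Fin nz => Φ (x₀ i) a) r).rank
      = Fintype.card ((Fin L × Fin m) ⊕ Fin nz))
    (u : ℕ → Fin m → ℝ) (y : ℕ → Fin p → ℝ) :
    -- (u, y) ∈ ℬ₂|_L iff ∃ g with H_d g = col(u, y):
    (∃ z : ℕ → (Fin nz → ℝ),
      ∀ k < L, z (k + 1) = A.mulVec (z k) + B.mulVec (u k) ∧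
        y k = C.mulVec (z k) + D.mulVec (u k)) ↔
    (∃ gc : Fin l → ℝ,
      (∀ k < L, ∀ a : Fin m, ∑ i : Fin l, ud i k a * gc i = u k a) ∧
      (∀ k < L, ∀ b : Fin p, ∑ i : Fin l, yd i k b * gc i = y k b)) := by
  classical
  choose xs hxs using hdata
  set Z : Fin l → ℕ → Fin nz → ℝ := fun i k => Φ (xs i k) with hZ
  have hZdyn : ∀ i : Fin l, ∀ k, k < L →
      Z i (k + 1) = A.mulVec (Z i k) + B.mulVec (ud i k) := by
    intro i k hk
    show Φ (xs i (k + 1)) = _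
    rw [((hxs i).2 k hk).1, hdyn]
  have hZout : ∀ i : Fin l, ∀ k, k < L →
      yd i k = C.mulVec (Z i k) + D.mulVec (ud i k) := by
    intro i k hk
    rw [((hxs i).2 k hk).2, hout]
  have hZ0 : ∀ i : Fin l, Z i 0 = Φ (x₀ i) := by
    intro i
    show Φ (xs i 0) = _
    rw [(hxs i).1]
  constructor
  · rintro ⟨z, hz⟩
    have hsurj := surjective_mulVec_of_rank _ hHK
    obtain ⟨gc, hgc⟩ := hsurj
      (Sum.elim (fun ka : Fin L × Fin m => u (ka.1 : ℕ) ka.2) (fun a : Fin nz => z 0 a))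
    have hgu : ∀ k, k < L → ∀ a : Fin m, ∑ i : Fin l, ud i k a * gc i = u k a := by
      intro k hk a
      have := congrFun hgc (Sum.inl (⟨k, hk⟩, a))
      simpa [Matrix.mulVec, dotProduct] using this
    have hgz0 : ∀ a : Fin nz, ∑ i : Fin l, gc i * Z i 0 a = z 0 a := by
      intro a
      have h1 := congrFun hgc (Sum.inr a)
      simp only [Matrix.mulVec, dotProduct, Matrix.of_apply, Sum.elim_inr] at h1
      rw [← h1]
      exact Finset.sum_congr rfl fun i _ => by rw [hZ0 i]; ring
    have key : ∀ k, k ≤ L → ∀ a : Fin nz, ∑ i : Fin l, gc i * Z i k a = z k a := by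
      intro k
      induction k with
      | zero => intro _ a; exact hgz0 a
      | succ k ih =>
        intro hk a
        have hkL : k < L := hk
        have step : ∑ i : Fin l, gc i * Z i (k + 1) a
            = A.mulVec (fun b => ∑ i : Fin l, gc i * Z i k b) a
              + B.mulVec (fun b => ∑ i : Fin l, gc i * ud i k b) a := by
          have e1 : ∑ i : Fin l, gc i * Z i (k + 1) a
              = ∑ i : Fin l, (gc i * A.mulVec (Z i k) a + gc i * B.mulVec (ud i k) a) :=
            Finset.sum_congr rfl fun i _ => by
              rw [hZdyn i k hkL]; simp [mul_add]
          rw [e1, Finset.sum_add_distrib, sum_mulVec' A, sum_mulVec' B]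
        rw [step]
        have hz1 : (fun b => ∑ i : Fin l, gc i * Z i k b) = z k :=
          funext fun b => ih (Nat.le_of_succ_le hk) b
        have hz2 : (fun b => ∑ i : Fin l, gc i * ud i k b) = u k :=
          funext fun b => by rw [← hgu k hkL b]; exact Finset.sum_congr rfl fun i _ => by ring
        rw [hz1, hz2, (hz k hkL).1]
        simp
    refine ⟨gc, fun k hk a => hgu k hk a, ?_⟩
    intro k hk b
    have : ∑ i : Fin l, yd i k b * gc i
        = C.mulVec (fun c => ∑ i : Fin l, gc i * Z i k c) b
          + D.mulVec (fun c => ∑ i : Fin l, gc i * ud i k c) b := by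
      have e1 : ∑ i : Fin l, yd i k b * gc i
          = ∑ i : Fin l, (gc i * C.mulVec (Z i k) b + gc i * D.mulVec (ud i k) b) :=
        Finset.sum_congr rfl fun i _ => by
          rw [hZout i k hk]; simp only [Pi.add_apply]; ring
      rw [e1, Finset.sum_add_distrib, sum_mulVec' C, sum_mulVec' D]
    rw [this]
    have hz1 : (fun c => ∑ i : Fin l, gc i * Z i k c) = z k :=
      funext fun c => key k (Nat.le_of_lt hk) c
    have hz2 : (fun c => ∑ i : Fin l, gc i * ud i k c) = u k :=
      funext fun c => by
        rw [← hgu k hk c]; exact Finset.sum_congr rfl fun i _ => by ring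
    rw [hz1, hz2, (hz k hk).2]
    simp
  · rintro ⟨gc, hgu, hgy⟩
    refine ⟨fun k a => ∑ i : Fin l, gc i * Z i k a, ?_⟩
    intro k hk
    constructor
    · funext a
      have step : ∑ i : Fin l, gc i * Z i (k + 1) a
          = A.mulVec (fun b => ∑ i : Fin l, gc i * Z i k b) a
            + B.mulVec (fun b => ∑ i : Fin l, gc i * ud i k b) a := by
        have e1 : ∑ i : Fin l, gc i * Z i (k + 1) a
            = ∑ i : Fin l, (gc i * A.mulVec (Z i k) a + gc i * B.mulVec (ud i k) a) :=
          Finset.sum_congr rfl fun i _ => by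
            rw [hZdyn i k hk]; simp [mul_add]
        rw [e1, Finset.sum_add_distrib, sum_mulVec' A, sum_mulVec' B]
      have hz2 : (fun b => ∑ i : Fin l, gc i * ud i k b) = u k :=
        funext fun b => by
          rw [← hgu k hk b]; exact Finset.sum_congr rfl fun i _ => by ring
      show ∑ i : Fin l, gc i * Z i (k + 1) a
        = (A.mulVec (fun b => ∑ i : Fin l, gc i * Z i k b) + B.mulVec (u k)) a
      rw [step, hz2]
      simp
    · funext b
      have step : ∑ i : Fin l, yd i k b * gc i
          = C.mulVec (fun c => ∑ i : Fin l, gc i * Z i k c) b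
            + D.mulVec (fun c => ∑ i : Fin l, gc i * ud i k c) b := by
        have e1 : ∑ i : Fin l, yd i k b * gc i
            = ∑ i : Fin l, (gc i * C.mulVec (Z i k) b + gc i * D.mulVec (ud i k) b) :=
          Finset.sum_congr rfl fun i _ => by
            rw [hZout i k hk]; simp only [Pi.add_apply]; ring
        rw [e1, Finset.sum_add_distrib, sum_mulVec' C, sum_mulVec' D]
      have hz2 : (fun c => ∑ i : Fin l, gc i * ud i k c) = u k :=
        funext fun c => by
          rw [← hgu k hk c]; exact Finset.sum_congr rfl fun i _ => by ring
      show y k b = (C.mulVec (fun c => ∑ i : Fin l, gc i * Z i k c) + D.mulVec (u k)) b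
      rw [← hgy k hk b, step, hz2]
      simp
end

section
/- Suppose the nonlinear system x_{k+1} = f(x_k, u_k), y_k = g(x_k, u_k) admits a Koopman linear embedding (Φ, A, B, C, D) of dimension n_z. Let (u_d, y_d) be a length-n_d input-output trajectory of the nonlinear system, let 1 ≤ L ≤ n_d, and let H_d := col(𝓗_L(u_d), 𝓗_L(y_d)) be the trajectory library formed by the order-L Hankel matrices of u_d and y_d. Then rank(H_d) ≤ mL + n_z. Consequently, if rank(H_d) > mL + n̄_z for some n̄_z, then the nonlinear system admits no Koopman linear embedding of dimension at most n̄_z. -/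
open Matrix

namespace Matrix

theorem rank_le_finrank_of_col_eq {K ι κ V : Type*} [Field K] [Fintype κ] [AddCommGroup V]
    [Module K V] [FiniteDimensional K V] (M : Matrix ι κ K) (F : V →ₗ[K] (ι → K)) (w : κ → V)
    (hM : ∀ j, M.col j = F (w j)) : M.rank ≤ Module.finrank K V := by
  have hspan : Submodule.span K (Set.range M.col) ≤ LinearMap.range F :=
    Submodule.span_le.mpr <| Set.range_subset_iff.mpr fun j => ⟨w j, (hM j).symm⟩
  rw [rank_eq_finrank_span_cols]
  exact (Submodule.finrank_mono hspan).trans F.finrank_range_le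

end Matrix

section LinearSystem

variable {R : Type*} [CommRing R] {nz m p : ℕ}

/-- The input at time `k` read off a window of `L` inputs; inputs after the window are zero. -/
def windowInput (L m k : ℕ) : (Fin L × Fin m → R) →ₗ[R] (Fin m → R) :=
  if h : k < L then LinearMap.pi fun b => LinearMap.proj (⟨k, h⟩, b) else 0

theorem windowInput_of_lt {L m k : ℕ} (h : k < L) (v : Fin L × Fin m → R) :
    windowInput L m k v = fun b => v (⟨k, h⟩, b) := by
  rw [windowInput, dif_pos h]
  rfl

variable (A : Matrix (Fin nz) (Fin nz) R) (B : Matrix (Fin nz) (Fin m) R)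
  (C : Matrix (Fin p) (Fin nz) R) (D : Matrix (Fin p) (Fin m) R) (L : ℕ)

def windowState : ℕ → ((Fin nz → R) × (Fin L × Fin m → R)) →ₗ[R] (Fin nz → R)
  | 0 => LinearMap.fst R _ _
  | k + 1 => A.mulVecLin ∘ₗ windowState k + B.mulVecLin ∘ₗ windowInput L m k ∘ₗ LinearMap.snd R _ _

theorem windowState_succ (k : ℕ) (w : (Fin nz → R) × (Fin L × Fin m → R)) :
    windowState A B L (k + 1) w = A *ᵥ windowState A B L k w + B *ᵥ windowInput L m k w.2 :=
  rfl

/-- The column of `col(𝓗_L(u), 𝓗_L(y))` that the linear system `(A, B, C, D)` produces from an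
initial state and an input window. -/
def ioWindow :
    ((Fin nz → R) × (Fin L × Fin m → R)) →ₗ[R] (Fin L × Fin m ⊕ Fin L × Fin p → R) :=
  LinearMap.pi <| Sum.elim (fun ib => LinearMap.proj ib ∘ₗ LinearMap.snd R _ _) fun ia =>
    LinearMap.proj ia.2 ∘ₗ (C.mulVecLin ∘ₗ windowState A B L ia.1 +
      D.mulVecLin ∘ₗ windowInput L m ia.1 ∘ₗ LinearMap.snd R _ _)

theorem ioWindow_inr (w : (Fin nz → R) × (Fin L × Fin m → R)) (ia : Fin L × Fin p) :
    ioWindow A B C D L w (Sum.inr ia) =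
      (C *ᵥ windowState A B L ia.1 w + D *ᵥ windowInput L m ia.1 w.2) ia.2 :=
  rfl

end LinearSystem

section Koopman

variable {X : Type*} {m p nz : ℕ}

def IsKoopmanEmbedding (f : X → (Fin m → ℝ) → X) (g : X → (Fin m → ℝ) → (Fin p → ℝ))
    (Φ : X → (Fin nz → ℝ)) (A : Matrix (Fin nz) (Fin nz) ℝ) (B : Matrix (Fin nz) (Fin m) ℝ)
    (C : Matrix (Fin p) (Fin nz) ℝ) (D : Matrix (Fin p) (Fin m) ℝ) : Prop :=
  (∀ x u, Φ (f x u) = A *ᵥ Φ x + B *ᵥ u) ∧ ∀ x u, g x u = C *ᵥ Φ x + D *ᵥ u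

def IsIOTrajectory (f : X → (Fin m → ℝ) → X) (g : X → (Fin m → ℝ) → (Fin p → ℝ)) (T : ℕ)
    (u : ℕ → Fin m → ℝ) (y : ℕ → Fin p → ℝ) : Prop :=
  ∃ x : ℕ → X, ∀ k < T, x (k + 1) = f (x k) (u k) ∧ y k = g (x k) (u k)

namespace IsKoopmanEmbedding

variable {f : X → (Fin m → ℝ) → X} {g : X → (Fin m → ℝ) → (Fin p → ℝ)}
  {Φ : X → (Fin nz → ℝ)} {A : Matrix (Fin nz) (Fin nz) ℝ} {B : Matrix (Fin nz) (Fin m) ℝ}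
  {C : Matrix (Fin p) (Fin nz) ℝ} {D : Matrix (Fin p) (Fin m) ℝ}

theorem lift_eq_windowState (hK : IsKoopmanEmbedding f g Φ A B C D) {T L : ℕ}
    {u : ℕ → Fin m → ℝ} {x : ℕ → X} (hx : ∀ k < T, x (k + 1) = f (x k) (u k)) (j : ℕ) :
    ∀ k ≤ L, j + k ≤ T →
      Φ (x (j + k)) = windowState A B L k (Φ (x j), fun ib => u (ib.1 + j) ib.2)
  | 0, _, _ => rfl
  | k + 1, hkL, hjk => by
    rw [windowState_succ, ← lift_eq_windowState hK hx j k (by omega) (by omega),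
      windowInput_of_lt (by omega), ← hK.1, ← Nat.add_assoc, hx (j + k) (by omega)]
    simp only [Nat.add_comm k j]

theorem hankel_col_eq_ioWindow (hK : IsKoopmanEmbedding f g Φ A B C D) {T L : ℕ}
    (hLT : L ≤ T) {u : ℕ → Fin m → ℝ} {y : ℕ → Fin p → ℝ} {x : ℕ → X}
    (hx : ∀ k < T, x (k + 1) = f (x k) (u k) ∧ y k = g (x k) (u k)) (j : Fin (T - L + 1)) :
    (fromRows (hankel m L T u) (hankel p L T y)).col j =
      ioWindow A B C D L (Φ (x j), (hankel m L T u).col j) := by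
  ext (ib | ⟨i, a⟩)
  · rfl
  · have hij : (i : ℕ) + j < T := by omega
    have hlift : Φ (x (j + i)) = windowState A B L i (Φ (x j), (hankel m L T u).col j) :=
      hK.lift_eq_windowState (fun k hk => (hx k hk).1) j i i.isLt.le (by omega)
    rw [ioWindow_inr, windowInput_of_lt i.isLt, ← hlift]
    simp [hankel, (hx _ hij).2, hK.2, Nat.add_comm (j : ℕ)]

theorem rank_hankel_le (hK : IsKoopmanEmbedding f g Φ A B C D) {T L : ℕ} (hLT : L ≤ T)
    {u : ℕ → Fin m → ℝ} {y : ℕ → Fin p → ℝ} (hT : IsIOTrajectory f g T u y) :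
    (fromRows (hankel m L T u) (hankel p L T y)).rank ≤ m * L + nz := by
  obtain ⟨x, hx⟩ := hT
  calc _ ≤ Module.finrank ℝ ((Fin nz → ℝ) × (Fin L × Fin m → ℝ)) :=
        rank_le_finrank_of_col_eq _ (ioWindow A B C D L) _ (hK.hankel_col_eq_ioWindow hLT hx)
    _ = m * L + nz := by simp [Module.finrank_prod, Nat.mul_comm, Nat.add_comm]

end IsKoopmanEmbedding

end Koopman

theorem rank_bound_koopman_and_nonexistence_general
    (n m p nz nd L : ℕ) (hLnd : L ≤ nd)
    (f : (Fin n → ℝ) → (Fin m → ℝ) → (Fin n → ℝ))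
    (g : (Fin n → ℝ) → (Fin m → ℝ) → (Fin p → ℝ))
    (Φ : (Fin n → ℝ) → (Fin nz → ℝ))
    (A : Matrix (Fin nz) (Fin nz) ℝ) (B : Matrix (Fin nz) (Fin m) ℝ)
    (C : Matrix (Fin p) (Fin nz) ℝ) (D : Matrix (Fin p) (Fin m) ℝ)
    -- (Φ, A, B, C, D) is a Koopman linear embedding of the nonlinear system (f, g):
    (hdyn : ∀ x u, Φ (f x u) = A.mulVec (Φ x) + B.mulVec u)
    (hout : ∀ x u, g x u = C.mulVec (Φ x) + D.mulVec u)
    -- (u_d, y_d) is a length-n_d input-output trajectory of the nonlinear system: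
    (ud : ℕ → Fin m → ℝ) (yd : ℕ → Fin p → ℝ)
    (hdata : ∃ x : ℕ → (Fin n → ℝ),
      ∀ k < nd, x (k + 1) = f (x k) (ud k) ∧ yd k = g (x k) (ud k)) :
    -- rank(H_d) ≤ mL + n_z, where H_d = col(𝓗_L(u_d), 𝓗_L(y_d)):
    (Matrix.fromRows (hankel m L nd ud) (hankel p L nd yd)).rank ≤ m * L + nz ∧
    -- consequently, if rank(H_d) > mL + n̄_z, then the system admits no Koopman linear
    -- embedding of dimension at most n̄_z:
    (∀ nbarz : ℕ,
      m * L + nbarz < (Matrix.fromRows (hankel m L nd ud) (hankel p L nd yd)).rank →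
      ¬ ∃ (nz' : ℕ) (_ : nz' ≤ nbarz) (Φ' : (Fin n → ℝ) → (Fin nz' → ℝ))
          (A' : Matrix (Fin nz') (Fin nz') ℝ) (B' : Matrix (Fin nz') (Fin m) ℝ)
          (C' : Matrix (Fin p) (Fin nz') ℝ) (D' : Matrix (Fin p) (Fin m) ℝ),
        (∀ x u, Φ' (f x u) = A'.mulVec (Φ' x) + B'.mulVec u) ∧
        (∀ x u, g x u = C'.mulVec (Φ' x) + D'.mulVec u)) := by
  refine ⟨IsKoopmanEmbedding.rank_hankel_le ⟨hdyn, hout⟩ hLnd hdata, ?_⟩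
  rintro nbarz hrank ⟨nz', hnz', Φ', A', B', C', D', hdyn', hout'⟩
  have hrank' := IsKoopmanEmbedding.rank_hankel_le ⟨hdyn', hout'⟩ hLnd hdata
  omega

theorem rank_bound_koopman_and_nonexistence
    (n m p nz nd L : ℕ) (hL : 1 ≤ L) (hLnd : L ≤ nd)
    (f : (Fin n → ℝ) → (Fin m → ℝ) → (Fin n → ℝ))
    (g : (Fin n → ℝ) → (Fin m → ℝ) → (Fin p → ℝ))
    (Φ : (Fin n → ℝ) → (Fin nz → ℝ))
    (A : Matrix (Fin nz) (Fin nz) ℝ) (B : Matrix (Fin nz) (Fin m) ℝ)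
    (C : Matrix (Fin p) (Fin nz) ℝ) (D : Matrix (Fin p) (Fin m) ℝ)
    -- (Φ, A, B, C, D) is a Koopman linear embedding of the nonlinear system (f, g):
    (hdyn : ∀ x u, Φ (f x u) = A.mulVec (Φ x) + B.mulVec u)
    (hout : ∀ x u, g x u = C.mulVec (Φ x) + D.mulVec u)
    -- (u_d, y_d) is a length-n_d input-output trajectory of the nonlinear system:
    (ud : ℕ → Fin m → ℝ) (yd : ℕ → Fin p → ℝ)
    (hdata : ∃ x : ℕ → (Fin n → ℝ),
      ∀ k < nd, x (k + 1) = f (x k) (ud k) ∧ yd k = g (x k) (ud k)) :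
    -- rank(H_d) ≤ mL + n_z, where H_d = col(𝓗_L(u_d), 𝓗_L(y_d)):
    (Matrix.fromRows (hankel m L nd ud) (hankel p L nd yd)).rank ≤ m * L + nz ∧
    -- consequently, if rank(H_d) > mL + n̄_z, then the system admits no Koopman linear
    -- embedding of dimension at most n̄_z:
    (∀ nbarz : ℕ,
      m * L + nbarz < (Matrix.fromRows (hankel m L nd ud) (hankel p L nd yd)).rank →
      ¬ ∃ (nz' : ℕ) (_ : nz' ≤ nbarz) (Φ' : (Fin n → ℝ) → (Fin nz' → ℝ))
          (A' : Matrix (Fin nz') (Fin nz') ℝ) (B' : Matrix (Fin nz') (Fin m) ℝ)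
          (C' : Matrix (Fin p) (Fin nz') ℝ) (D' : Matrix (Fin p) (Fin m) ℝ),
        (∀ x u, Φ' (f x u) = A'.mulVec (Φ' x) + B'.mulVec u) ∧
        (∀ x u, g x u = C'.mulVec (Φ' x) + D'.mulVec u)) :=
  rank_bound_koopman_and_nonexistence_general n m p nz nd L hLnd f g Φ A B C D hdyn hout ud yd hdata
end
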